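/- As a module over the group algebra ℚ[S_{dn}] (under the diagonal action), W(d) is isomorphic to the direct sum ⊕_D ℛ(δ(D)), where D ranges over all (d,n)-correlated diagrams. -/

import Mathlib

/-!
An in-row permutation `π` of one filling multiplies the class of a pair in `W(d)` by `sign π`.
Hence, writing `ε(S)` for the sign of a filling read row by row, `ε(S) ε(T) [S, T]` depends only
on the map `m ↦ (row of m in S, row of m in T)`; conversely `(S, T) ↦ ε(S) ε(T) · [that map]` kills
the antisymmetry elements, so `W(d)` is free on the maps `F : [dn] → [d]²` all of whose row and
column fibres have size `n`. The fibre sizes of such an `F` form a correlated diagram `D`, and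
once the cells of `D` are enumerated in the order of `δ(D)`, the maps with fibre sizes `D` are
exactly the row tabloids of shape `δ(D)`. Relabelling by `σ` turns `F` into `F ∘ σ⁻¹`, which is
`σ` acting on tabloids, and leaves `ε(S) ε(T)` unchanged.
-/

noncomputable section

/-- A filling: a `d × n` tableau filled bijectively with the labels `1, …, dn`
(first index = row). -/
abbrev Filling (n d : ℕ) := (Fin d × Fin n) ≃ Fin (d * n)

/-- The free `ℚ`-vector space `𝒫` on the set of pairs of fillings. -/
abbrev PSpace (n d : ℕ) := (Filling n d × Filling n d) →₀ ℚ

/-- The antisymmetry elements of `𝒫`. -/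
def AntisymSet (n d : ℕ) : Set (PSpace n d) :=
  {x | ∃ (S T : Filling n d) (i : Fin d) (c₁ c₂ : Fin n), c₁ ≠ c₂ ∧
    (x = Finsupp.single (S, T) 1 +
          Finsupp.single ((Equiv.swap (i, c₁) (i, c₂)).trans S, T) 1 ∨
     x = Finsupp.single (S, T) 1 +
          Finsupp.single (S, (Equiv.swap (i, c₁) (i, c₂)).trans T) 1)}

/-- `W(d)`: the quotient of `𝒫` by the span of the antisymmetry elements. -/
abbrev Wspace (n d : ℕ) := PSpace n d ⧸ Submodule.span ℚ (AntisymSet n d)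

/-- A `(d,n)`-correlated diagram: a `d × d` array of naturals whose row sums and
column sums all equal `n`. -/
def CorrDiagram (n d : ℕ) :=
  {D : Fin d × Fin d → ℕ //
    (∀ i : Fin d, ∑ j : Fin d, D (i, j) = n) ∧ (∀ j : Fin d, ∑ i : Fin d, D (i, j) = n)}

open Classical in
/-- The shape of a pair of fillings `(S,T)`:
`D_{S,T}(i,j) = #{k : k occurs in row i of S and in row j of T}`. -/
def shapeOf (n d : ℕ) (ST : Filling n d × Filling n d) : Fin d × Fin d → ℕ :=
  fun ij => (Finset.univ.filter (fun k : Fin (d * n) =>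
    (ST.1.symm k).1 = ij.1 ∧ (ST.2.symm k).1 = ij.2)).card

/-- `δ(D)`: the entries of the diagram `D`, listed in non-increasing order. -/
def delta (n d : ℕ) (D : Fin d × Fin d → ℕ) : List ℕ :=
  (Multiset.sort (Multiset.map D Finset.univ.val) (· ≤ ·)).reverse

/-- A row tabloid of shape `l` on the ground set `Fin N`: a tuple of pairwise disjoint
subsets covering `Fin N`, the `t`-th having `l.get t` elements. -/
structure RowTabloid (N : ℕ) (l : List ℕ) where
  parts : Fin l.length → Finset (Fin N)
  disjoint : ∀ t t' : Fin l.length, t ≠ t' → Disjoint (parts t) (parts t')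
  cover : ∀ x : Fin N, ∃ t, x ∈ parts t
  cards : ∀ t, (parts t).card = l.get t

/-- The row tabloid module `ℛ(l)`: the free `ℚ`-vector space on row tabloids of shape `l`. -/
abbrev RowTabloidModule (N : ℕ) (l : List ℕ) := RowTabloid N l →₀ ℚ

/-- The action of a permutation of the ground set on row tabloids:
`σ·(P₁,…,P_ℓ) = (σ(P₁),…,σ(P_ℓ))`. -/
def permTabloid (N : ℕ) (l : List ℕ) (σ : Equiv.Perm (Fin N)) (P : RowTabloid N l) :
    RowTabloid N l where
  parts := fun t => (P.parts t).map σ.toEmbedding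
  disjoint := fun t t' h => (Finset.disjoint_map _).mpr (P.disjoint t t' h)
  cover := fun x => by
    obtain ⟨t, ht⟩ := P.cover (σ.symm x)
    exact ⟨t, Finset.mem_map.mpr ⟨σ.symm x, ht, by simp⟩⟩
  cards := fun t => by simp [Finset.card_map, P.cards]

open Finset Equiv

theorem Equiv.Perm.swap_induction_on_fiberwise {α β : Type*} [Fintype α] [DecidableEq α]
    (g : α → β) {motive : Perm α → Prop} (f : Perm α) (hf : ∀ x, g (f x) = g x)
    (one : motive 1)
    (swap_mul : ∀ f x y, x ≠ y → g x = g y → motive f → motive (swap x y * f)) :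
    motive f := by
  induction h : #f.support using Nat.strong_induction_on generalizing f with
  | _ k ih =>
    by_cases hf1 : f = 1
    · exact hf1 ▸ one
    obtain ⟨x, hx⟩ : ∃ x, f x ≠ x := not_forall.mp fun h => hf1 (Equiv.ext h)
    have hswap : ∀ y, g ((swap x (f x) * f) y) = g y := fun y => by
      rw [Perm.mul_apply, swap_apply_def]
      split_ifs with h1 h2
      · rw [hf, ← h1, hf]
      · rw [← hf x, ← h2, hf]
      · rw [hf]
    have key := swap_mul _ x (f x) (Ne.symm hx) (hf x).symm
      (ih _ (h ▸ Perm.card_support_swap_mul hx) _ hswap rfl)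
    rwa [swap_mul_self_mul] at key

theorem Equiv.exists_apply_eq_of_card_fiber_eq {α β γ : Type*} [Fintype α] [Fintype β]
    [DecidableEq γ] {f : α → γ} {g : β → γ}
    (h : ∀ c, Fintype.card {a // f a = c} = Fintype.card {b // g b = c}) :
    ∃ e : α ≃ β, ∀ a, g (e a) = f a :=
  ⟨ofFiberEquiv fun c => Fintype.equivOfCardEq (h c), ofFiberEquiv_map _⟩

lemma Finset.card_filter_fst_eq {α β : Type*} [Fintype α] [Fintype β] [DecidableEq α] (a : α) :
    #({x : α × β | x.1 = a} : Finset _) = Fintype.card β := by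
  rw [show ({x : α × β | x.1 = a} : Finset _) = {a} ×ˢ univ by
    ext x; simp only [mem_filter, mem_univ, true_and, mem_product, mem_singleton, and_true],
    card_product, card_singleton, one_mul, card_univ]

lemma DirectSum.of_single_apply_map {ι M : Type*} [DecidableEq ι] [AddCommMonoid M]
    {η : ι → Type*} (f : ∀ i, η i → η i) (i j : ι) (a : η i) (c : M) :
    DirectSum.of (fun i => η i →₀ M) i (Finsupp.single (f i a) c) j =
      Finsupp.mapDomain (f j) (DirectSum.of (fun i => η i →₀ M) i (Finsupp.single a c) j) := by
  by_cases h : j = i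
  · subst h
    simp [Finsupp.mapDomain_single]
  · simp [DirectSum.of_eq_of_ne _ _ _ h]

section

variable {N : ℕ} {κ : Type*} [DecidableEq κ] {l : List ℕ}

def fiberCard (F : Fin N → κ) (x : κ) : ℕ := #{m | F m = x}

lemma fiberCard_comp_symm (F : Fin N → κ) (σ : Perm (Fin N)) :
    fiberCard (F ∘ σ.symm) = fiberCard F :=
  funext fun _ => card_equiv σ.symm (by simp)

lemma sum_fiberCard_mk_left {β γ : Type*} [Fintype γ] [DecidableEq β] [DecidableEq γ]
    (F : Fin N → β × γ) (i : β) : ∑ j, fiberCard F (i, j) = #{m | (F m).1 = i} := by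
  rw [card_eq_sum_card_fiberwise (f := fun m => (F m).2) (t := univ) fun _ _ => mem_univ _]
  refine sum_congr rfl fun j _ => ?_
  rw [fiberCard, filter_filter]
  simp only [Prod.ext_iff]

lemma sum_fiberCard_mk_right {β γ : Type*} [Fintype β] [DecidableEq β] [DecidableEq γ]
    (F : Fin N → β × γ) (j : γ) : ∑ i, fiberCard F (i, j) = #{m | (F m).2 = j} := by
  rw [card_eq_sum_card_fiberwise (f := fun m => (F m).1) (t := univ) fun _ _ => mem_univ _]
  refine sum_congr rfl fun i _ => ?_
  rw [fiberCard, filter_filter]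
  simp only [Prod.ext_iff, and_comm]

namespace RowTabloid

lemma ext_parts {P Q : RowTabloid N l} (h : P.parts = Q.parts) : P = Q := by
  cases P; cases Q; cases h; rfl

def partIndex (P : RowTabloid N l) (m : Fin N) : Fin l.length := (P.cover m).choose

lemma partIndex_eq_iff {P : RowTabloid N l} {m : Fin N} {k : Fin l.length} :
    P.partIndex m = k ↔ m ∈ P.parts k := by
  have hm : m ∈ P.parts (P.partIndex m) := (P.cover m).choose_spec
  refine ⟨fun h => h ▸ hm, fun hk => ?_⟩
  by_contra hne
  exact disjoint_left.mp (P.disjoint _ _ hne) hm hk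

def ofFun (τ : Fin l.length ≃ κ) (F : Fin N → κ) (hF : ∀ k, fiberCard F (τ k) = l.get k) :
    RowTabloid N l where
  parts k := {m | F m = τ k}
  disjoint k k' hk := disjoint_filter.mpr fun _ _ h h' => hk (τ.injective (h.symm.trans h'))
  cover m := ⟨τ.symm (F m), by simp⟩
  cards := hF

def equivFiberCard (τ : Fin l.length ≃ κ) (c : κ → ℕ) (hc : ∀ k, l.get k = c (τ k)) :
    {F : Fin N → κ // fiberCard F = c} ≃ RowTabloid N l where
  toFun F := ofFun τ F.1 fun k => by rw [F.2, hc]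
  invFun P := ⟨fun m => τ (P.partIndex m), funext fun x => by
    have hfib : ({m | τ (P.partIndex m) = x} : Finset (Fin N)) = P.parts (τ.symm x) := by
      ext m
      simp [← partIndex_eq_iff, eq_symm_apply]
    rw [fiberCard, hfib, P.cards, hc, apply_symm_apply]⟩
  left_inv F := Subtype.ext <| funext fun m => by
    simp [partIndex_eq_iff.mpr (show m ∈ (ofFun τ F.1 _).parts (τ.symm (F.1 m)) by simp [ofFun])]
  right_inv P := ext_parts <| funext fun k => by
    ext m
    simp [ofFun, partIndex_eq_iff]

lemma equivFiberCard_comp_symm (τ : Fin l.length ≃ κ) (c : κ → ℕ) (hc : ∀ k, l.get k = c (τ k))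
    (σ : Perm (Fin N)) {F F' : {F : Fin N → κ // fiberCard F = c}} (h : F'.1 = F.1 ∘ σ.symm) :
    equivFiberCard τ c hc F' = permTabloid N l σ (equivFiberCard τ c hc F) := by
  refine ext_parts <| funext fun k => ?_
  ext m
  simp [equivFiberCard, ofFun, permTabloid, h, mem_map_equiv]

end RowTabloid

end

lemma exists_delta_enum (n d : ℕ) (D : Fin d × Fin d → ℕ) :
    ∃ τ : Fin (delta n d D).length ≃ Fin d × Fin d, ∀ k, D (τ k) = (delta n d D).get k := by
  refine Equiv.exists_apply_eq_of_card_fiber_eq fun c => ?_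
  have hmultiset : Multiset.map (delta n d D).get univ.val = Multiset.map D univ.val := by
    rw [Fin.univ_val_map, List.ofFn_get, delta, Multiset.coe_reverse, Multiset.sort_eq]
  have hcount := congrArg (Multiset.count c) hmultiset
  rw [Multiset.count_map, Multiset.count_map] at hcount
  simpa [Fintype.card_subtype, Finset.card, eq_comm] using hcount

def deltaEnum (n d : ℕ) (D : Fin d × Fin d → ℕ) : Fin (delta n d D).length ≃ Fin d × Fin d :=
  (exists_delta_enum n d D).choose

lemma delta_get_eq (n d : ℕ) (D : Fin d × Fin d → ℕ) (k : Fin (delta n d D).length) :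
    (delta n d D).get k = D (deltaEnum n d D k) :=
  ((exists_delta_enum n d D).choose_spec k).symm

variable {n d : ℕ}

def rowPair (S T : Filling n d) (m : Fin (d * n)) : Fin d × Fin d :=
  ((S.symm m).1, (T.symm m).1)

lemma card_filter_symm_fst_eq (S : Filling n d) (i : Fin d) : #{m | (S.symm m).1 = i} = n := by
  rw [card_equiv S.symm (t := {x | x.1 = i}) (by simp), card_filter_fst_eq, Fintype.card_fin]

lemma exists_filling_symm_fst_eq (q : Fin (d * n) → Fin d) (hq : ∀ i, #{m | q m = i} = n) :
    ∃ S : Filling n d, ∀ m, (S.symm m).1 = q m := by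
  obtain ⟨S, hS⟩ := Equiv.exists_apply_eq_of_card_fiber_eq (f := (Prod.fst : Fin d × Fin n → Fin d))
    (g := q) fun i => by
    rw [Fintype.card_subtype, Fintype.card_subtype, hq, card_filter_fst_eq, Fintype.card_fin]
  exact ⟨S, fun m => by simpa using (hS (S.symm m)).symm⟩

def shapeDiagram (S T : Filling n d) : CorrDiagram n d :=
  ⟨fiberCard (rowPair S T),
    fun i => by rw [sum_fiberCard_mk_left]; exact card_filter_symm_fst_eq S i,
    fun j => by rw [sum_fiberCard_mk_right]; exact card_filter_symm_fst_eq T j⟩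

abbrev CellMap (n d : ℕ) :=
  Σ D : CorrDiagram n d, {F : Fin (d * n) → Fin d × Fin d // fiberCard F = D.1}

def cellMapOf (S T : Filling n d) : CellMap n d := ⟨shapeDiagram S T, rowPair S T, rfl⟩

lemma cellMapOf_eq_iff {S T S' T' : Filling n d} :
    cellMapOf S T = cellMapOf S' T' ↔ rowPair S T = rowPair S' T' :=
  ⟨fun h => congrArg (fun x : CellMap n d => x.2.1) h,
    fun h => Sigma.subtype_ext (Subtype.ext (by simp [cellMapOf, shapeDiagram, h])) h⟩

lemma exists_cellMapOf_eq (x : CellMap n d) : ∃ ST : Filling n d × Filling n d,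
    cellMapOf ST.1 ST.2 = x := by
  obtain ⟨D, F, hF⟩ := x
  obtain ⟨S, hS⟩ := exists_filling_symm_fst_eq (fun m => (F m).1) fun i => by
    rw [← sum_fiberCard_mk_left, hF]; exact D.2.1 i
  obtain ⟨T, hT⟩ := exists_filling_symm_fst_eq (fun m => (F m).2) fun j => by
    rw [← sum_fiberCard_mk_right, hF]; exact D.2.2 j
  have hF' : rowPair S T = F := funext fun m => Prod.ext (hS m) (hT m)
  exact ⟨(S, T), Sigma.subtype_ext (Subtype.ext (by simp [cellMapOf, shapeDiagram, hF', hF])) hF'⟩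

def CellMap.fillings (x : CellMap n d) : Filling n d × Filling n d :=
  (exists_cellMapOf_eq x).choose

lemma CellMap.cellMapOf_fillings (x : CellMap n d) :
    cellMapOf x.fillings.1 x.fillings.2 = x :=
  (exists_cellMapOf_eq x).choose_spec

def CellMap.relabel (σ : Perm (Fin (d * n))) (x : CellMap n d) : CellMap n d :=
  ⟨x.1, x.2.1 ∘ σ.symm, (fiberCard_comp_symm _ σ).trans x.2.2⟩

lemma cellMapOf_trans (S T : Filling n d) (σ : Perm (Fin (d * n))) :
    cellMapOf (S.trans σ) (T.trans σ) = (cellMapOf S T).relabel σ :=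
  Sigma.subtype_ext (Subtype.ext (fiberCard_comp_symm (rowPair S T) σ)) rfl

def cellMapEquiv (n d : ℕ) :
    CellMap n d ≃ Σ D : CorrDiagram n d, RowTabloid (d * n) (delta n d D.1) :=
  Equiv.sigmaCongrRight fun D =>
    RowTabloid.equivFiberCard (deltaEnum n d D.1) D.1 (delta_get_eq n d D.1)

lemma cellMapEquiv_relabel (σ : Perm (Fin (d * n))) (x : CellMap n d) :
    cellMapEquiv n d (x.relabel σ) =
      ⟨(cellMapEquiv n d x).1, permTabloid _ _ σ (cellMapEquiv n d x).2⟩ :=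
  Sigma.ext rfl (heq_of_eq (RowTabloid.equivFiberCard_comp_symm _ _ _ σ rfl))

def fillingSign (S : Filling n d) : ℤˣ := Perm.sign (finProdFinEquiv.symm.trans S)

lemma fillingSign_perm_trans (π : Perm (Fin d × Fin n)) (S : Filling n d) :
    fillingSign (π.trans S) = Perm.sign π * fillingSign S := by
  have h : finProdFinEquiv.symm.trans (π.trans S) =
      ((finProdFinEquiv.symm.trans π).trans finProdFinEquiv).trans
        (finProdFinEquiv.symm.trans S) := by
    ext; simp
  rw [fillingSign, h, Perm.sign_trans, Perm.sign_symm_trans_trans, mul_comm, fillingSign]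

lemma fillingSign_trans_perm (S : Filling n d) (σ : Perm (Fin (d * n))) :
    fillingSign (S.trans σ) = Perm.sign σ * fillingSign S := by
  rw [fillingSign, ← trans_assoc, Perm.sign_trans, fillingSign]

lemma sign_trans_symm (S S' : Filling n d) :
    Perm.sign (S.trans S'.symm) = fillingSign S * fillingSign S' := by
  have h := fillingSign_perm_trans (S.trans S'.symm) S'
  rw [trans_assoc, symm_trans_self, trans_refl] at h
  rw [h, mul_assoc, Int.units_mul_self, mul_one]

lemma rowPair_swap_trans_left (S T : Filling n d) {a b : Fin d × Fin n} (h : a.1 = b.1) :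
    rowPair ((swap a b).trans S) T = rowPair S T := by
  funext m
  simp only [rowPair, symm_trans_apply, symm_swap, Prod.mk.injEq, and_true]
  rw [swap_apply_def]
  split_ifs <;> simp_all

lemma rowPair_swap_trans_right (S T : Filling n d) {a b : Fin d × Fin n} (h : a.1 = b.1) :
    rowPair S ((swap a b).trans T) = rowPair S T := by
  funext m
  simp only [rowPair, symm_trans_apply, symm_swap, Prod.mk.injEq, true_and]
  rw [swap_apply_def]
  split_ifs <;> simp_all

namespace Wspace

def of (S T : Filling n d) : Wspace n d := Submodule.Quotient.mk (Finsupp.single (S, T) 1)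

lemma of_swap_trans_left (S T : Filling n d) {a b : Fin d × Fin n} (hab : a ≠ b)
    (h : a.1 = b.1) : of ((swap a b).trans S) T = -of S T := by
  refine eq_neg_of_add_eq_zero_right ?_
  rw [of, of, ← Submodule.Quotient.mk_add, Submodule.Quotient.mk_eq_zero]
  obtain ⟨i, c₁⟩ := a
  obtain ⟨j, c₂⟩ := b
  obtain rfl : i = j := h
  exact Submodule.subset_span ⟨S, T, i, c₁, c₂, fun hc => hab (hc ▸ rfl), Or.inl rfl⟩

lemma of_swap_trans_right (S T : Filling n d) {a b : Fin d × Fin n} (hab : a ≠ b)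
    (h : a.1 = b.1) : of S ((swap a b).trans T) = -of S T := by
  refine eq_neg_of_add_eq_zero_right ?_
  rw [of, of, ← Submodule.Quotient.mk_add, Submodule.Quotient.mk_eq_zero]
  obtain ⟨i, c₁⟩ := a
  obtain ⟨j, c₂⟩ := b
  obtain rfl : i = j := h
  exact Submodule.subset_span ⟨S, T, i, c₁, c₂, fun hc => hab (hc ▸ rfl), Or.inr rfl⟩

lemma of_perm_trans_left {π : Perm (Fin d × Fin n)} (hπ : ∀ x, (π x).1 = x.1)
    (S T : Filling n d) : of (π.trans S) T = Perm.sign π • of S T := by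
  refine Perm.swap_induction_on_fiberwise Prod.fst
    (motive := fun π => ∀ S, of (π.trans S) T = Perm.sign π • of S T) π hπ ?_ ?_ S
  · simp [Perm.one_def]
  · intro π a b hab h ih S
    rw [Perm.mul_def, trans_assoc, ih, of_swap_trans_left S T hab h, Perm.sign_trans,
      Perm.sign_swap hab, neg_one_mul, Units.neg_smul, smul_neg]

lemma of_perm_trans_right {ρ : Perm (Fin d × Fin n)} (hρ : ∀ x, (ρ x).1 = x.1)
    (S T : Filling n d) : of S (ρ.trans T) = Perm.sign ρ • of S T := by
  refine Perm.swap_induction_on_fiberwise Prod.fst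
    (motive := fun ρ => ∀ T, of S (ρ.trans T) = Perm.sign ρ • of S T) ρ hρ ?_ ?_ T
  · simp [Perm.one_def]
  · intro ρ a b hab h ih T
    rw [Perm.mul_def, trans_assoc, ih, of_swap_trans_right S T hab h, Perm.sign_trans,
      Perm.sign_swap hab, neg_one_mul, Units.neg_smul, smul_neg]

lemma of_eq_smul_of_rowPair_eq {S T S' T' : Filling n d} (h : rowPair S T = rowPair S' T') :
    of S T = (fillingSign S * fillingSign S' * (fillingSign T * fillingSign T')) • of S' T' := by
  have hS : ∀ x, ((S.trans S'.symm) x).1 = x.1 := fun x => by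
    simpa [rowPair] using (congrArg Prod.fst (congrFun h (S x))).symm
  have hT : ∀ x, ((T.trans T'.symm) x).1 = x.1 := fun x => by
    simpa [rowPair] using (congrArg Prod.snd (congrFun h (T x))).symm
  calc of S T = of ((S.trans S'.symm).trans S') ((T.trans T'.symm).trans T') := by
        simp only [trans_assoc, symm_trans_self, trans_refl]
    _ = _ := by
      rw [of_perm_trans_left hS, of_perm_trans_right hT, smul_smul, sign_trans_symm,
        sign_trans_symm]

end Wspace

def cellCoeff : PSpace n d →ₗ[ℚ] CellMap n d →₀ ℚ :=
  Finsupp.linearCombination ℚ fun ST =>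
    (fillingSign ST.1 * fillingSign ST.2) • Finsupp.single (cellMapOf ST.1 ST.2) 1

lemma span_antisymSet_le_ker_cellCoeff :
    Submodule.span ℚ (AntisymSet n d) ≤ LinearMap.ker (cellCoeff (n := n) (d := d)) := by
  rw [Submodule.span_le]
  rintro x ⟨S, T, i, c₁, c₂, hc, rfl | rfl⟩
  all_goals
    have hne : ((i, c₁) : Fin d × Fin n) ≠ (i, c₂) := fun h => hc (congrArg Prod.snd h)
    have hrow : (i, c₁).1 = (i, c₂).1 := rfl
  · rw [SetLike.mem_coe, LinearMap.mem_ker, map_add, cellCoeff]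
    simp [fillingSign_perm_trans, Perm.sign_swap hne,
      cellMapOf_eq_iff.mpr (rowPair_swap_trans_left S T hrow)]
  · rw [SetLike.mem_coe, LinearMap.mem_ker, map_add, cellCoeff]
    simp [fillingSign_perm_trans, Perm.sign_swap hne,
      cellMapOf_eq_iff.mpr (rowPair_swap_trans_right S T hrow)]

def toCellFinsupp : Wspace n d →ₗ[ℚ] CellMap n d →₀ ℚ :=
  Submodule.liftQ _ cellCoeff span_antisymSet_le_ker_cellCoeff

lemma toCellFinsupp_of (S T : Filling n d) :
    toCellFinsupp (Wspace.of S T) =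
      (fillingSign S * fillingSign T) • Finsupp.single (cellMapOf S T) 1 := by
  simp [toCellFinsupp, Wspace.of, cellCoeff]

def ofCellFinsupp : (CellMap n d →₀ ℚ) →ₗ[ℚ] Wspace n d :=
  Finsupp.linearCombination ℚ fun x =>
    (fillingSign x.fillings.1 * fillingSign x.fillings.2) • Wspace.of x.fillings.1 x.fillings.2

lemma ofCellFinsupp_single (x : CellMap n d) :
    ofCellFinsupp (Finsupp.single x 1) =
      (fillingSign x.fillings.1 * fillingSign x.fillings.2) • Wspace.of x.fillings.1 x.fillings.2 :=
  by rw [ofCellFinsupp, Finsupp.linearCombination_single, one_smul]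

def equivCellFinsupp (n d : ℕ) : Wspace n d ≃ₗ[ℚ] (CellMap n d →₀ ℚ) :=
  LinearEquiv.ofLinearMap toCellFinsupp ofCellFinsupp
    (Finsupp.lhom_ext' fun x => LinearMap.ext_ring <| by
      simp [ofCellFinsupp_single, toCellFinsupp_of, smul_smul, mul_mul_mul_comm,
        Int.units_mul_self, CellMap.cellMapOf_fillings])
    (Submodule.linearMap_qext _ <| Finsupp.lhom_ext' fun ST => LinearMap.ext_ring <| by
      obtain ⟨S, T⟩ := ST
      have h := cellMapOf_eq_iff.mp (cellMapOf S T).cellMapOf_fillings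
      change ofCellFinsupp (toCellFinsupp (Wspace.of S T)) = Wspace.of S T
      rw [toCellFinsupp_of, map_zsmul_unit, ofCellFinsupp_single, smul_smul,
        Wspace.of_eq_smul_of_rowPair_eq h.symm, mul_mul_mul_comm])

open scoped DirectSum in
def wspaceEquivDirectSum (n d : ℕ) :
    Wspace n d ≃ₗ[ℚ] ⨁ D : CorrDiagram n d, RowTabloidModule (d * n) (delta n d D.1) :=
  (equivCellFinsupp n d).trans
    ((Finsupp.domLCongr (cellMapEquiv n d)).trans (sigmaFinsuppLequivDFinsupp ℚ))

open Classical in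
lemma wspaceEquivDirectSum_of (S T : Filling n d) :
    wspaceEquivDirectSum n d (Wspace.of S T) =
      (fillingSign S * fillingSign T) •
        DirectSum.of (fun D : CorrDiagram n d => RowTabloidModule (d * n) (delta n d D.1))
          (cellMapEquiv n d (cellMapOf S T)).1
          (Finsupp.single (cellMapEquiv n d (cellMapOf S T)).2 1) := by
  rw [wspaceEquivDirectSum, LinearEquiv.trans_apply, LinearEquiv.trans_apply, equivCellFinsupp,
    LinearEquiv.coe_ofLinearMap, toCellFinsupp_of, map_zsmul_unit, map_zsmul_unit,
    Finsupp.domLCongr_single]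
  exact congrArg _ (sigmaFinsuppEquivDFinsupp_single _ _)

open scoped DirectSum in
theorem stmt8_general (n d : ℕ) :
    ∃ e : Wspace n d ≃ₗ[ℚ]
        (⨁ D : CorrDiagram n d, RowTabloidModule (d * n) (delta n d D.1)),
      ∀ (σ : Equiv.Perm (Fin (d * n))) (S T : Filling n d) (D : CorrDiagram n d),
        e (Submodule.Quotient.mk
            (Finsupp.single ((S.trans σ, T.trans σ) : Filling n d × Filling n d) (1 : ℚ))) D =
        Finsupp.mapDomain (permTabloid (d * n) (delta n d D.1) σ)
          (e (Submodule.Quotient.mk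
              (Finsupp.single ((S, T) : Filling n d × Filling n d) (1 : ℚ))) D) := by
  classical
  refine ⟨wspaceEquivDirectSum n d, fun σ S T D => ?_⟩
  change wspaceEquivDirectSum n d (Wspace.of _ _) D =
    Finsupp.mapDomain _ (wspaceEquivDirectSum n d (Wspace.of S T) D)
  have hsign :
      fillingSign (S.trans σ) * fillingSign (T.trans σ) = fillingSign S * fillingSign T := by
    rw [fillingSign_trans_perm, fillingSign_trans_perm, mul_mul_mul_comm, Int.units_mul_self,
      one_mul]
  rw [wspaceEquivDirectSum_of, wspaceEquivDirectSum_of, cellMapOf_trans, cellMapEquiv_relabel,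
    hsign, DFinsupp.smul_apply, DFinsupp.smul_apply, Finsupp.mapDomain_smul]
  exact congrArg _ (DirectSum.of_single_apply_map (fun D => permTabloid _ _ σ) _ D _ 1)

open scoped DirectSum in
/-- `W(d)` is isomorphic to `⊕_D ℛ(δ(D))` (sum over all `(d,n)`-correlated diagrams) as a
`ℚ[S_{dn}]`-module: there is a `ℚ`-linear equivalence intertwining the diagonal
`S_{dn}`-action on `W(d)` with the componentwise action on the direct sum. -/
theorem stmt8 (n d : ℕ) (hn : 0 < n) (hd : 0 < d) :
    ∃ e : Wspace n d ≃ₗ[ℚ]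
        (⨁ D : CorrDiagram n d, RowTabloidModule (d * n) (delta n d D.1)),
      ∀ (σ : Equiv.Perm (Fin (d * n))) (S T : Filling n d) (D : CorrDiagram n d),
        e (Submodule.Quotient.mk
            (Finsupp.single ((S.trans σ, T.trans σ) : Filling n d × Filling n d) (1 : ℚ))) D =
        Finsupp.mapDomain (permTabloid (d * n) (delta n d D.1) σ)
          (e (Submodule.Quotient.mk
              (Finsupp.single ((S, T) : Filling n d × Filling n d) (1 : ℚ))) D) :=
  stmt8_general n d
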